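/- arXiv:1512.05974 — 6 statements merged into one kernel-verified Lean document; each statement's English description precedes it below -/
import Mathlib

section
/- Let f be a flow in an equality network N, let λ ≥ 0, and let (S,T) be a cut at λ. Let K ⊆ B∖S be a set of buyers with r_f(b) ≥ λ for every b ∈ K, and let L = {c ∈ C∖T : (b,c) ∈ E for some b ∈ K}. Assume every good in L is saturated by f and f(b,c) = 0 for every b ∈ B∖(S∪K) and every c ∈ L. Then (S∪K, T∪L) is a cut at λ and cap_λ(S∪K, T∪L) ≤ cap_λ(S,T); i.e., moving K and L from the sink side to the source side does not increase the capacity of the cut. -/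
open scoped Classical

/-- An equality network: buyers `B`, goods `C`, adjacency `E`,
budgets `e > 0` and prices `p > 0`; every buyer is adjacent to some good
and every good is adjacent to some buyer. -/
structure EqNet (B C : Type) [Fintype B] [Fintype C] [Nonempty B] [Nonempty C] where
  E : B → C → Prop
  e : B → ℝ
  p : C → ℝ
  buyer_adj : ∀ b, ∃ c, E b c
  good_adj : ∀ c, ∃ b, E b c
  e_pos : ∀ b, 0 < e b
  p_pos : ∀ c, 0 < p c

variable {B C : Type} [Fintype B] [Fintype C] [Nonempty B] [Nonempty C]

/-- A flow in an equality network. -/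
def IsFlow (N : EqNet B C) (f : B → C → ℝ) : Prop :=
  (∀ b c, 0 ≤ f b c) ∧ (∀ b c, ¬ N.E b c → f b c = 0) ∧
  (∀ b, ∑ c, f b c ≤ N.e b) ∧ (∀ c, ∑ b, f b c ≤ N.p c)

/-- The value of a flow. -/
def flowValue (f : B → C → ℝ) : ℝ := ∑ b, ∑ c, f b c

/-- A maximum flow. -/
def IsMaxFlow (N : EqNet B C) (f : B → C → ℝ) : Prop :=
  IsFlow N f ∧ ∀ g, IsFlow N g → flowValue g ≤ flowValue f

/-- The surplus of buyer `b` with respect to flow `f`. -/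
def surplus (N : EqNet B C) (f : B → C → ℝ) (b : B) : ℝ := N.e b - ∑ c, f b c

/-- A good `c` is saturated by `f`. -/
def Saturated (N : EqNet B C) (f : B → C → ℝ) (c : C) : Prop := ∑ b, f b c = N.p c

/-- A balanced flow: a maximum flow minimizing the two-norm of the surplus vector. -/
def IsBalancedFlow (N : EqNet B C) (f : B → C → ℝ) : Prop :=
  IsMaxFlow N f ∧
  ∀ g, IsMaxFlow N g → ∑ b, (surplus N f b) ^ 2 ≤ ∑ b, (surplus N g b) ^ 2

/-- A cut of the parametric network: `S ⊆ B`, `T ⊆ C` on the source side,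
with every good adjacent to a buyer in `S` belonging to `T`. -/
def IsCut (N : EqNet B C) (S : Finset B) (T : Finset C) : Prop :=
  ∀ b ∈ S, ∀ c, N.E b c → c ∈ T

/-- The capacity of the cut `(S, T)` at parameter `lam`. -/
noncomputable def cutCap (N : EqNet B C) (lam : ℝ) (S : Finset B) (T : Finset C) : ℝ :=
  ∑ b ∈ Sᶜ, max 0 (N.e b - lam) + ∑ c ∈ T, N.p c

/-- `(S, T)` is a minimum cut at `lam`. -/
def IsMinCut (N : EqNet B C) (lam : ℝ) (S : Finset B) (T : Finset C) : Prop :=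
  IsCut N S T ∧ ∀ S' T', IsCut N S' T' → cutCap N lam S T ≤ cutCap N lam S' T'

/-- `(S, T)` is the minimum cut at `lam` with minimum sink side. -/
def HasMinSink (N : EqNet B C) (lam : ℝ) (S : Finset B) (T : Finset C) : Prop :=
  IsMinCut N lam S T ∧ ∀ S' T', IsMinCut N lam S' T' → S' ⊆ S ∧ T' ⊆ T

/-- The min-cut capacity function `κ(λ)`. -/
noncomputable def kappa (N : EqNet B C) (lam : ℝ) : ℝ :=
  sInf {x | ∃ S T, IsCut N S T ∧ cutCap N lam S T = x}

/-- `B_1 ∪ … ∪ B_i` (and similarly for goods): union of the blocks with index `≤ i`. -/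
noncomputable def blocksUpTo {h : ℕ} {α : Type} (D : Fin h → Finset α) (i : Fin h) : Finset α :=
  (Finset.univ.filter (fun j => j ≤ i)).biUnion D

/-! The goods of `L` are saturated and paid for only by buyers of `K`, each of whom spends at most
`e(b) - λ`; so the prices of `L` added to the cut are covered by the buyer capacities removed. -/

open Finset

section

variable {N : EqNet B C}

theorem IsCut.union_adjacent {S : Finset B} {T : Finset C} (hcut : IsCut N S T) (K : Finset B) :
    IsCut N (S ∪ K) (T ∪ univ.filter (fun c => c ∉ T ∧ ∃ b ∈ K, N.E b c)) := by
  intro b hb c hE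
  rcases mem_union.mp hb with hbS | hbK
  · exact mem_union_left _ (hcut b hbS c hE)
  · by_cases hcT : c ∈ T
    · exact mem_union_left _ hcT
    · exact mem_union_right _ (mem_filter.mpr ⟨mem_univ c, hcT, b, hbK, hE⟩)

theorem IsFlow.eq_zero_of_isCut {f : B → C → ℝ} (hf : IsFlow N f) {S : Finset B} {T : Finset C}
    (hcut : IsCut N S T) {b : B} (hb : b ∈ S) {c : C} (hc : c ∉ T) : f b c = 0 :=
  hf.2.1 b c fun hE => hc (hcut b hb c hE)

theorem cutCap_union_union (lam : ℝ) {S K : Finset B} {T L : Finset C}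
    (hSK : Disjoint S K) (hTL : Disjoint T L) :
    cutCap N lam (S ∪ K) (T ∪ L) =
      cutCap N lam S T - ∑ b ∈ K, max 0 (N.e b - lam) + ∑ c ∈ L, N.p c := by
  have hcompl : (S ∪ K)ᶜ = Sᶜ \ K := by
    ext b
    simp only [mem_compl, mem_union, mem_sdiff, not_or]
  have hsplit := sum_sdiff (f := fun b => max 0 (N.e b - lam))
    fun b hb => mem_compl.mpr (disjoint_right.mp hSK hb)
  unfold cutCap
  rw [hcompl, sum_union hTL]
  linarith

theorem sum_price_le_of_saturated {f : B → C → ℝ} (hf : IsFlow N f) {K : Finset B} {L : Finset C}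
    (hsat : ∀ c ∈ L, Saturated N f c) (honly : ∀ b ∉ K, ∀ c ∈ L, f b c = 0) :
    ∑ c ∈ L, N.p c ≤ ∑ b ∈ K, ∑ c, f b c :=
  calc ∑ c ∈ L, N.p c = ∑ c ∈ L, ∑ b, f b c := (sum_congr rfl fun c hc => hsat c hc).symm
    _ = ∑ b, ∑ c ∈ L, f b c := sum_comm
    _ = ∑ b ∈ K, ∑ c ∈ L, f b c :=
        (sum_subset (subset_univ K) fun b _ hbK => sum_eq_zero (honly b hbK)).symm
    _ ≤ ∑ b ∈ K, ∑ c, f b c :=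
        sum_le_sum fun b _ => sum_le_sum_of_subset_of_nonneg (subset_univ L)
          fun c _ _ => hf.1 b c

end

theorem move_to_source_not_increase_general (N : EqNet B C) (f : B → C → ℝ) (hf : IsFlow N f)
    (lam : ℝ)
    (S : Finset B) (T : Finset C) (hcut : IsCut N S T)
    (K : Finset B) (hKS : ∀ b ∈ K, b ∉ S) (hKr : ∀ b ∈ K, lam ≤ surplus N f b)
    (L : Finset C) (hL : L = Finset.univ.filter (fun c => c ∉ T ∧ ∃ b ∈ K, N.E b c))
    (hLsat : ∀ c ∈ L, Saturated N f c)
    (hKonly : ∀ b, b ∉ S → b ∉ K → ∀ c ∈ L, f b c = 0) :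
    IsCut N (S ∪ K) (T ∪ L) ∧ cutCap N lam (S ∪ K) (T ∪ L) ≤ cutCap N lam S T := by
  have hLT : ∀ c ∈ L, c ∉ T := fun c hc => (mem_filter.mp (hL ▸ hc)).2.1
  have honly : ∀ b ∉ K, ∀ c ∈ L, f b c = 0 := fun b hbK c hc => by
    by_cases hbS : b ∈ S
    · exact hf.eq_zero_of_isCut hcut hbS (hLT c hc)
    · exact hKonly b hbS hbK c hc
  have hprice : ∑ c ∈ L, N.p c ≤ ∑ b ∈ K, max 0 (N.e b - lam) :=
    (sum_price_le_of_saturated hf hLsat honly).trans <| sum_le_sum fun b hb => by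
      have := hKr b hb
      unfold surplus at this
      exact le_max_of_le_right (by linarith)
  refine ⟨hL ▸ hcut.union_adjacent K, ?_⟩
  rw [cutCap_union_union lam (disjoint_right.mpr hKS) (disjoint_right.mpr hLT)]
  linarith

/-- Moving `K` (buyers of surplus `≥ λ` on the sink side) together with
`L` (the sink-side goods adjacent to `K`) from the sink side to the source side gives a
cut whose capacity did not increase, provided the goods in `L` are saturated and all
flow into `L` comes from `S ∪ K`. -/
theorem move_to_source_not_increase (N : EqNet B C) (f : B → C → ℝ) (hf : IsFlow N f)
    (lam : ℝ) (hlam : 0 ≤ lam)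
    (S : Finset B) (T : Finset C) (hcut : IsCut N S T)
    (K : Finset B) (hKS : ∀ b ∈ K, b ∉ S) (hKr : ∀ b ∈ K, lam ≤ surplus N f b)
    (L : Finset C) (hL : L = Finset.univ.filter (fun c => c ∉ T ∧ ∃ b ∈ K, N.E b c))
    (hLsat : ∀ c ∈ L, Saturated N f c)
    (hKonly : ∀ b, b ∉ S → b ∉ K → ∀ c ∈ L, f b c = 0) :
    IsCut N (S ∪ K) (T ∪ L) ∧ cutCap N lam (S ∪ K) (T ∪ L) ≤ cutCap N lam S T :=
  move_to_source_not_increase_general N f hf lam S T hcut K hKS hKr L hL hLsat hKonly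
end

section
/- Let f be a flow in an equality network N, let λ > 0, and let F ⊆ B be a nonempty set of buyers with r_f(b) < λ for every b ∈ F. Then ∑_{b∈F} max(0, e(b) − λ) < ∑_{c∈Γ(F)} p(c), where Γ(F) = {c ∈ C : (b,c) ∈ E for some b ∈ F}. -/
/-!
Every unit of flow leaving a buyer of `F` enters a good of `Γ(F)`, so the total outflow of `F`
is at most the total price of `Γ(F)`. A surplus below `λ` means each buyer of `F` sends out more
than `e(b) - λ`, and at least `0`; this gives the weak inequality. It is strict at any buyer with
`e(b) > λ`, and if there is none the left side vanishes while `Γ(F)` is a nonempty set of goods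
of positive price.
-/

open scoped Classical

variable {B C : Type} [Fintype B] [Fintype C] [Nonempty B] [Nonempty C]

/-- The neighbourhood `Γ(F)` of a set of buyers. -/
noncomputable def EqNet.neighbors (N : EqNet B C) (F : Finset B) : Finset C :=
  Finset.univ.filter (fun c => ∃ b ∈ F, N.E b c)

lemma EqNet.neighbors_nonempty (N : EqNet B C) {F : Finset B} (hF : F.Nonempty) :
    (N.neighbors F).Nonempty := by
  obtain ⟨b, hb⟩ := hF
  obtain ⟨c, hc⟩ := N.buyer_adj b
  exact ⟨c, Finset.mem_filter.2 ⟨Finset.mem_univ c, b, hb, hc⟩⟩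

lemma EqNet.sum_price_neighbors_pos (N : EqNet B C) {F : Finset B} (hF : F.Nonempty) :
    0 < ∑ c ∈ N.neighbors F, N.p c :=
  Finset.sum_pos (fun c _ => N.p_pos c) (N.neighbors_nonempty hF)

lemma max_zero_sub_lt_outflow {N : EqNet B C} {f : B → C → ℝ} {lam : ℝ} {b : B}
    (hb : surplus N f b < lam) (hlam : lam < N.e b) : max 0 (N.e b - lam) < ∑ c, f b c := by
  unfold surplus at hb
  exact max_lt (by linarith) (by linarith)

namespace IsFlow

variable {N : EqNet B C} {f : B → C → ℝ}

lemma outflow_eq_sum_neighbors (hf : IsFlow N f) {F : Finset B} {b : B} (hb : b ∈ F) :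
    ∑ c, f b c = ∑ c ∈ N.neighbors F, f b c := by
  refine (Finset.sum_subset (Finset.subset_univ _) fun c _ hc => hf.2.1 b c fun hbc => ?_).symm
  exact hc (Finset.mem_filter.2 ⟨Finset.mem_univ c, b, hb, hbc⟩)

lemma sum_outflow_le_sum_price_neighbors (hf : IsFlow N f) (F : Finset B) :
    ∑ b ∈ F, ∑ c, f b c ≤ ∑ c ∈ N.neighbors F, N.p c :=
  calc ∑ b ∈ F, ∑ c, f b c = ∑ b ∈ F, ∑ c ∈ N.neighbors F, f b c :=
        Finset.sum_congr rfl fun _ hb => hf.outflow_eq_sum_neighbors hb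
    _ = ∑ c ∈ N.neighbors F, ∑ b ∈ F, f b c := Finset.sum_comm
    _ ≤ ∑ c ∈ N.neighbors F, ∑ b, f b c := Finset.sum_le_sum fun c _ =>
        Finset.sum_le_sum_of_subset_of_nonneg (Finset.subset_univ F) fun b _ _ => hf.1 b c
    _ ≤ ∑ c ∈ N.neighbors F, N.p c := Finset.sum_le_sum fun c _ => hf.2.2.2 c

lemma max_zero_sub_le_outflow (hf : IsFlow N f) {lam : ℝ} {b : B} (hb : surplus N f b < lam) :
    max 0 (N.e b - lam) ≤ ∑ c, f b c := by
  unfold surplus at hb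
  exact max_le (Finset.sum_nonneg fun c _ => hf.1 b c) (by linarith)

end IsFlow

theorem small_surplus_strict_general (N : EqNet B C) (f : B → C → ℝ) (hf : IsFlow N f)
    (lam : ℝ) (F : Finset B) (hFne : F.Nonempty)
    (hsmall : ∀ b ∈ F, surplus N f b < lam) :
    ∑ b ∈ F, max 0 (N.e b - lam) <
      ∑ c ∈ Finset.univ.filter (fun c => ∃ b ∈ F, N.E b c), N.p c := by
  change _ < ∑ c ∈ N.neighbors F, N.p c
  by_cases hbig : ∃ b₀ ∈ F, lam < N.e b₀
  · obtain ⟨b₀, hb₀, hlam⟩ := hbig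
    calc ∑ b ∈ F, max 0 (N.e b - lam) < ∑ b ∈ F, ∑ c, f b c :=
          Finset.sum_lt_sum (fun b hb => hf.max_zero_sub_le_outflow (hsmall b hb))
            ⟨b₀, hb₀, max_zero_sub_lt_outflow (hsmall b₀ hb₀) hlam⟩
      _ ≤ ∑ c ∈ N.neighbors F, N.p c := hf.sum_outflow_le_sum_price_neighbors F
  · push Not at hbig
    have hzero : ∑ b ∈ F, max 0 (N.e b - lam) = 0 :=
      Finset.sum_eq_zero fun b hb => max_eq_left (sub_nonpos.2 (hbig b hb))
    rw [hzero]
    exact N.sum_price_neighbors_pos hFne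

/-- If `F` is a nonempty set of buyers, each of surplus `< λ` w.r.t. a
flow `f` and `λ > 0`, then `∑_{b∈F} max(0, e(b) − λ) < ∑_{c∈Γ(F)} p(c)`. -/
theorem small_surplus_strict (N : EqNet B C) (f : B → C → ℝ) (hf : IsFlow N f)
    (lam : ℝ) (hlam : 0 < lam) (F : Finset B) (hFne : F.Nonempty)
    (hsmall : ∀ b ∈ F, surplus N f b < lam) :
    ∑ b ∈ F, max 0 (N.e b - lam) <
      ∑ c ∈ Finset.univ.filter (fun c => ∃ b ∈ F, N.E b c), N.p c :=
  small_surplus_strict_general N f hf lam F hFne hsmall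
end

section
/- For every i with 1 ≤ i < h and every λ with r_{i+1} < λ ≤ r_i, if (S,T) is a minimum cut at λ with minimum sink side, then B_1 ∪ … ∪ B_i ⊆ S and C_1 ∪ … ∪ C_i ⊆ T. -/
open scoped Classical

variable {B C : Type} [Fintype B] [Fintype C] [Nonempty B] [Nonempty C]

/-! If the buyers `X = B_1 ∪ … ∪ B_i` and goods `Y = C_1 ∪ … ∪ C_i` are added to the source
side of a minimum cut `(S, T)` at `λ ≤ r_i`, the new goods `Y \ T` cost at most what the new
buyers `X \ S` save: every good of `Y \ T` is saturated by `f*` using flow from `X \ S` only,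
and every buyer of `X` sends at most `e(b) - r_i ≤ e(b) - λ`. So the enlarged cut is again
minimum, and minimality of the sink side forces `X ⊆ S`, `Y ⊆ T`. -/

namespace IsCut

variable {N : EqNet B C} {S S' : Finset B} {T T' : Finset C}

theorem union (h : IsCut N S T) (h' : IsCut N S' T') : IsCut N (S ∪ S') (T ∪ T') := by
  intro b hb c hbc
  rcases Finset.mem_union.1 hb with hb | hb
  · exact Finset.mem_union_left _ (h b hb c hbc)
  · exact Finset.mem_union_right _ (h' b hb c hbc)

theorem flow_eq_zero {f : B → C → ℝ} (hf : IsFlow N f) (h : IsCut N S T) {b : B} {c : C}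
    (hb : b ∈ S) (hc : c ∉ T) : f b c = 0 :=
  hf.2.1 b c fun hbc => hc (h b hb c hbc)

end IsCut

theorem cutCap_union_add (N : EqNet B C) (lam : ℝ) (S S' : Finset B) (T T' : Finset C) :
    cutCap N lam (S ∪ S') (T ∪ T') + ∑ b ∈ S' \ S, max 0 (N.e b - lam)
      = cutCap N lam S T + ∑ c ∈ T' \ T, N.p c := by
  have hcompl : Sᶜ = (S ∪ S')ᶜ ∪ (S' \ S) := by
    ext b
    simp only [Finset.mem_compl, Finset.mem_union, Finset.mem_sdiff]
    tauto
  have hdisj : Disjoint (S ∪ S')ᶜ (S' \ S) :=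
    Finset.disjoint_left.2 fun b hb hb' =>
      Finset.mem_compl.1 hb (Finset.mem_union_right _ (Finset.mem_sdiff.1 hb').1)
  have hT : T ∪ T' = T ∪ (T' \ T) := Finset.union_sdiff_self_eq_union.symm
  unfold cutCap
  rw [hcompl, Finset.sum_union hdisj, hT, Finset.sum_union Finset.disjoint_sdiff]
  ring

theorem HasMinSink.subset_of_isCut {N : EqNet B C} {lam : ℝ} {S S' : Finset B}
    {T T' : Finset C} (hST : HasMinSink N lam S T) (hcut : IsCut N S' T')
    (hle : ∑ c ∈ T' \ T, N.p c ≤ ∑ b ∈ S' \ S, max 0 (N.e b - lam)) : S' ⊆ S ∧ T' ⊆ T := by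
  obtain ⟨⟨hcutST, hminST⟩, hsink⟩ := hST
  have hcap : cutCap N lam (S ∪ S') (T ∪ T') ≤ cutCap N lam S T := by
    linarith [cutCap_union_add N lam S S' T T']
  obtain ⟨hS, hT⟩ :=
    hsink _ _ ⟨hcutST.union hcut, fun S'' T'' h'' => hcap.trans (hminST S'' T'' h'')⟩
  exact ⟨Finset.subset_union_right.trans hS, Finset.subset_union_right.trans hT⟩

theorem sum_price_sdiff_le_sum_outflow {N : EqNet B C} {f : B → C → ℝ} (hf : IsFlow N f)
    {S X : Finset B} {T Y : Finset C} (hcut : IsCut N S T) (hsat : ∀ c ∈ Y, Saturated N f c)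
    (hzero : ∀ b ∉ X, ∀ c ∈ Y, f b c = 0) :
    ∑ c ∈ Y \ T, N.p c ≤ ∑ b ∈ X \ S, ∑ c, f b c := by
  have hprice : ∀ c ∈ Y \ T, N.p c = ∑ b ∈ X \ S, f b c := by
    intro c hc
    obtain ⟨hcY, hcT⟩ := Finset.mem_sdiff.1 hc
    rw [← hsat c hcY]
    refine (Finset.sum_subset (Finset.subset_univ _) fun b _ hb => ?_).symm
    by_cases hbS : b ∈ S
    · exact hcut.flow_eq_zero hf hbS hcT
    · exact hzero b (fun hbX => hb (Finset.mem_sdiff.2 ⟨hbX, hbS⟩)) c hcY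
  calc ∑ c ∈ Y \ T, N.p c = ∑ c ∈ Y \ T, ∑ b ∈ X \ S, f b c := Finset.sum_congr rfl hprice
    _ = ∑ b ∈ X \ S, ∑ c ∈ Y \ T, f b c := Finset.sum_comm
    _ ≤ ∑ b ∈ X \ S, ∑ c, f b c :=
      Finset.sum_le_sum fun b _ =>
        Finset.sum_le_sum_of_subset_of_nonneg (Finset.subset_univ _) fun c _ _ => hf.1 b c

theorem outflow_le_max_sub {N : EqNet B C} {f : B → C → ℝ} {lam : ℝ} {b : B}
    (hb : lam ≤ surplus N f b) : ∑ c, f b c ≤ max 0 (N.e b - lam) := by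
  unfold surplus at hb
  exact le_max_of_le_right (by linarith)

section Blocks

variable {h : ℕ} {α : Type}

theorem mem_blocksUpTo {D : Fin h → Finset α} {i : Fin h} {x : α} :
    x ∈ blocksUpTo D i ↔ ∃ j ≤ i, x ∈ D j := by
  simp [blocksUpTo]

theorem exists_mem_of_biUnion_eq_univ [Fintype α] {D : Fin h → Finset α}
    (hcover : Finset.univ.biUnion D = Finset.univ) (x : α) : ∃ j, x ∈ D j := by
  have hx : x ∈ Finset.univ.biUnion D := hcover ▸ Finset.mem_univ x
  simpa using hx

theorem isCut_blocksUpTo {N : EqNet B C} {BB : Fin h → Finset B} {CC : Fin h → Finset C}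
    (hCcover : Finset.univ.biUnion CC = Finset.univ)
    (hnoedge : ∀ i j : Fin h, i < j → ∀ b ∈ BB i, ∀ c ∈ CC j, ¬ N.E b c) (i : Fin h) :
    IsCut N (blocksUpTo BB i) (blocksUpTo CC i) := by
  intro b hb c hbc
  obtain ⟨j, hji, hbj⟩ := mem_blocksUpTo.1 hb
  obtain ⟨k, hck⟩ := exists_mem_of_biUnion_eq_univ hCcover c
  have hkj : k ≤ j := not_lt.1 fun hjk => hnoedge j k hjk b hbj c hck hbc
  exact mem_blocksUpTo.2 ⟨k, hkj.trans hji, hck⟩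

theorem flow_eq_zero_of_notMem_blocksUpTo {β γ : Type} [Fintype β] {BB : Fin h → Finset β}
    {CC : Fin h → Finset γ} {f : β → γ → ℝ} (hBcover : Finset.univ.biUnion BB = Finset.univ)
    (hflow0 : ∀ i j : Fin h, j < i → ∀ b ∈ BB i, ∀ c ∈ CC j, f b c = 0) {i : Fin h} {b : β}
    (hb : b ∉ blocksUpTo BB i) {c : γ} (hc : c ∈ blocksUpTo CC i) : f b c = 0 := by
  obtain ⟨j, hji, hcj⟩ := mem_blocksUpTo.1 hc
  obtain ⟨k, hbk⟩ := exists_mem_of_biUnion_eq_univ hBcover b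
  have hik : i < k := not_le.1 fun hki => hb (mem_blocksUpTo.2 ⟨k, hki, hbk⟩)
  exact hflow0 k j (hji.trans_lt hik) b hbk c hcj

end Blocks

theorem min_sink_cut_contains_blocks_general (N : EqNet B C)
    {h : ℕ}
    (BB : Fin h → Finset B) (CC : Fin h → Finset C) (r : Fin h → ℝ)
    (fstar : B → C → ℝ) (hbal : IsBalancedFlow N fstar)
    (hBcover : Finset.univ.biUnion BB = Finset.univ)
    (hCcover : Finset.univ.biUnion CC = Finset.univ)
    (hranti : StrictAnti r)
    (hsurp : ∀ i, ∀ b ∈ BB i, surplus N fstar b = r i)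
    (hsat : ∀ i : Fin h, (i : ℕ) + 1 < h → ∀ c ∈ CC i, Saturated N fstar c)
    (hflow0 : ∀ i j : Fin h, j < i → ∀ b ∈ BB i, ∀ c ∈ CC j, fstar b c = 0)
    (hnoedge : ∀ i j : Fin h, i < j → ∀ b ∈ BB i, ∀ c ∈ CC j, ¬ N.E b c)
    (i : Fin h) (hi : (i : ℕ) + 1 < h) (lam : ℝ)
    (hlam2 : lam ≤ r i)
    (S : Finset B) (T : Finset C) (hST : HasMinSink N lam S T) :
    blocksUpTo BB i ⊆ S ∧ blocksUpTo CC i ⊆ T := by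
  have hflow : IsFlow N fstar := hbal.1.1
  have hsatY : ∀ c ∈ blocksUpTo CC i, Saturated N fstar c := fun c hc => by
    obtain ⟨j, hji, hcj⟩ := mem_blocksUpTo.1 hc
    exact hsat j (lt_of_le_of_lt (Nat.succ_le_succ hji) hi) c hcj
  have hsurpX : ∀ b ∈ blocksUpTo BB i, lam ≤ surplus N fstar b := fun b hb => by
    obtain ⟨j, hji, hbj⟩ := mem_blocksUpTo.1 hb
    exact hsurp j b hbj ▸ hlam2.trans (hranti.antitone hji)
  refine hST.subset_of_isCut (isCut_blocksUpTo hCcover hnoedge i) ?_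
  calc ∑ c ∈ blocksUpTo CC i \ T, N.p c
      ≤ ∑ b ∈ blocksUpTo BB i \ S, ∑ c, fstar b c :=
        sum_price_sdiff_le_sum_outflow hflow hST.1.1 hsatY fun b hb c hc =>
          flow_eq_zero_of_notMem_blocksUpTo hBcover hflow0 hb hc
    _ ≤ ∑ b ∈ blocksUpTo BB i \ S, max 0 (N.e b - lam) :=
        Finset.sum_le_sum fun b hb => outflow_le_max_sub (hsurpX b (Finset.mem_sdiff.1 hb).1)

/-- For `1 ≤ i < h` and `r_{i+1} < λ ≤ r_i`, the minimum cut of minimum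
sink side at `λ` contains `B_1 ∪ … ∪ B_i` and `C_1 ∪ … ∪ C_i` on its source side. -/
theorem min_sink_cut_contains_blocks (N : EqNet B C)
    {h : ℕ} (hpos : 0 < h)
    (BB : Fin h → Finset B) (CC : Fin h → Finset C) (r : Fin h → ℝ)
    (fstar : B → C → ℝ) (hbal : IsBalancedFlow N fstar)
    (hBne : ∀ i, (BB i).Nonempty)
    (hBdisj : ∀ i j, i ≠ j → Disjoint (BB i) (BB j))
    (hBcover : Finset.univ.biUnion BB = Finset.univ)
    (hCdisj : ∀ i j, i ≠ j → Disjoint (CC i) (CC j))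
    (hCcover : Finset.univ.biUnion CC = Finset.univ)
    (hranti : StrictAnti r)
    (hrlast : r ⟨h - 1, Nat.sub_lt hpos Nat.one_pos⟩ = 0)
    (hsurp : ∀ i, ∀ b ∈ BB i, surplus N fstar b = r i)
    (hsat : ∀ i : Fin h, (i : ℕ) + 1 < h → ∀ c ∈ CC i, Saturated N fstar c)
    (hflow0 : ∀ i j : Fin h, j < i → ∀ b ∈ BB i, ∀ c ∈ CC j, fstar b c = 0)
    (hnoedge : ∀ i j : Fin h, i < j → ∀ b ∈ BB i, ∀ c ∈ CC j, ¬ N.E b c)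
    (hrecv : ∀ i : Fin h, (i : ℕ) + 1 < h → ∀ c ∈ CC i, ∃ b ∈ BB i, 0 < fstar b c)
    (i : Fin h) (hi : (i : ℕ) + 1 < h) (lam : ℝ)
    (hlam1 : r ⟨(i : ℕ) + 1, hi⟩ < lam) (hlam2 : lam ≤ r i)
    (S : Finset B) (T : Finset C) (hST : HasMinSink N lam S T) :
    blocksUpTo BB i ⊆ S ∧ blocksUpTo CC i ⊆ T :=
  min_sink_cut_contains_blocks_general N BB CC r fstar hbal hBcover hCcover hranti hsurp hsat hflow0
    hnoedge i hi lam hlam2 S T hST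
end

section
/- For every λ > r_1, the pair (∅, ∅) is the unique minimum cut at λ; in particular, κ(λ) = ∑_{b∈B} max(0, e(b) − λ) and every buyer and every good lies on the sink side of every minimum cut at λ. -/
open scoped Classical

variable {B C : Type} [Fintype B] [Fintype C] [Nonempty B] [Nonempty C]

/-! Every buyer keeps a surplus `r_f*(b) ≤ r_1 < λ`, so `f*` sends at least `max 0 (e b − λ)` out
of each buyer, strictly more when that outflow is positive. All flow leaving `S` along a cut `(S, T)`
enters `T`, so the source edges of `S` carry at most the prices of `T`, strictly less unless
`(S, T) = (∅, ∅)` (if no flow leaves `S`, the prices of a nonempty `T` still add up to something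
positive). Hence moving `(S, T)` to the sink side strictly lowers the capacity. -/

section Cuts

variable {N : EqNet B C} {lam : ℝ}

lemma cutCap_eq_sub_add (N : EqNet B C) (lam : ℝ) (S : Finset B) (T : Finset C) :
    cutCap N lam S T =
      ∑ b, max 0 (N.e b - lam) - ∑ b ∈ S, max 0 (N.e b - lam) + ∑ c ∈ T, N.p c := by
  rw [cutCap, ← Finset.sum_compl_add_sum S]
  ring

lemma cutCap_empty_empty (N : EqNet B C) (lam : ℝ) :
    cutCap N lam ∅ ∅ = ∑ b, max 0 (N.e b - lam) := by
  simp [cutCap]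

lemma isCut_empty_empty (N : EqNet B C) : IsCut N ∅ ∅ := by
  simp [IsCut]

lemma IsCut.nonempty_right {S : Finset B} {T : Finset C} (hcut : IsCut N S T)
    (hS : S.Nonempty) : T.Nonempty := by
  obtain ⟨b, hb⟩ := hS
  obtain ⟨c, hc⟩ := N.buyer_adj b
  exact ⟨c, hcut b hb c hc⟩

lemma kappa_eq_of_isMinCut {S : Finset B} {T : Finset C} (hmin : IsMinCut N lam S T) :
    kappa N lam = cutCap N lam S T := by
  have hmem : cutCap N lam S T ∈ {x | ∃ S T, IsCut N S T ∧ cutCap N lam S T = x} :=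
    ⟨S, T, hmin.1, rfl⟩
  have hlb : cutCap N lam S T ∈ lowerBounds {x | ∃ S T, IsCut N S T ∧ cutCap N lam S T = x} := by
    rintro x ⟨S', T', hcut', rfl⟩
    exact hmin.2 S' T' hcut'
  exact le_antisymm (csInf_le ⟨_, hlb⟩ hmem) (le_csInf ⟨_, hmem⟩ hlb)

end Cuts

section Flows

variable {N : EqNet B C} {f : B → C → ℝ} {lam : ℝ}

lemma IsFlow.sum_outflow_le_of_isCut (hf : IsFlow N f) {S : Finset B} {T : Finset C}
    (hcut : IsCut N S T) : ∑ b ∈ S, ∑ c, f b c ≤ ∑ c ∈ T, N.p c := by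
  obtain ⟨hf0, hfE, -, hfp⟩ := hf
  calc ∑ b ∈ S, ∑ c, f b c = ∑ b ∈ S, ∑ c ∈ T, f b c := by
        refine Finset.sum_congr rfl fun b hb => (Finset.sum_subset (Finset.subset_univ T) ?_).symm
        exact fun c _ hcT => hfE b c fun hE => hcT (hcut b hb c hE)
    _ = ∑ c ∈ T, ∑ b ∈ S, f b c := Finset.sum_comm
    _ ≤ ∑ c ∈ T, ∑ b, f b c := Finset.sum_le_sum fun c _ =>
        Finset.sum_le_sum_of_subset_of_nonneg (Finset.subset_univ S) fun b _ _ => hf0 b c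
    _ ≤ ∑ c ∈ T, N.p c := Finset.sum_le_sum fun c _ => hfp c

lemma IsFlow.max_sub_le_outflow (hf : IsFlow N f) {b : B} (hb : surplus N f b ≤ lam) :
    max 0 (N.e b - lam) ≤ ∑ c, f b c :=
  max_le (Finset.sum_nonneg fun c _ => hf.1 b c) (sub_le_comm.1 hb)

lemma IsFlow.sum_max_sub_le_of_isCut (hf : IsFlow N f) (hsurp : ∀ b, surplus N f b ≤ lam)
    {S : Finset B} {T : Finset C} (hcut : IsCut N S T) :
    ∑ b ∈ S, max 0 (N.e b - lam) ≤ ∑ c ∈ T, N.p c :=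
  (Finset.sum_le_sum fun b _ => hf.max_sub_le_outflow (hsurp b)).trans
    (hf.sum_outflow_le_of_isCut hcut)

lemma IsFlow.sum_max_sub_lt_of_isCut (hf : IsFlow N f) (hsurp : ∀ b, surplus N f b < lam)
    {S : Finset B} {T : Finset C} (hcut : IsCut N S T) (hne : S.Nonempty ∨ T.Nonempty) :
    ∑ b ∈ S, max 0 (N.e b - lam) < ∑ c ∈ T, N.p c := by
  have hle b : max 0 (N.e b - lam) ≤ ∑ c, f b c := hf.max_sub_le_outflow (hsurp b).le
  by_cases hout_pos : ∃ b ∈ S, 0 < ∑ c, f b c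
  · obtain ⟨b₀, hb₀, hout⟩ := hout_pos
    have hb₀lt : max 0 (N.e b₀ - lam) < ∑ c, f b₀ c := max_lt hout (sub_lt_comm.1 (hsurp b₀))
    exact (Finset.sum_lt_sum (fun b _ => hle b) ⟨b₀, hb₀, hb₀lt⟩).trans_le
      (hf.sum_outflow_le_of_isCut hcut)
  · push Not at hout_pos
    have hzero : ∑ b ∈ S, max 0 (N.e b - lam) = 0 :=
      Finset.sum_eq_zero fun b hb => le_antisymm ((hle b).trans (hout_pos b hb)) (le_max_left _ _)
    have hT : T.Nonempty := hne.elim hcut.nonempty_right id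
    rw [hzero]
    exact Finset.sum_pos (fun c _ => N.p_pos c) hT

lemma IsFlow.isMinCut_empty_empty (hf : IsFlow N f) (hsurp : ∀ b, surplus N f b ≤ lam) :
    IsMinCut N lam ∅ ∅ := by
  refine ⟨isCut_empty_empty N, fun S T hcut => ?_⟩
  rw [cutCap_eq_sub_add, cutCap_eq_sub_add]
  simp only [Finset.sum_empty]
  linarith [hf.sum_max_sub_le_of_isCut hsurp hcut]

lemma IsFlow.eq_empty_of_isMinCut (hf : IsFlow N f) (hsurp : ∀ b, surplus N f b < lam)
    {S : Finset B} {T : Finset C} (hmin : IsMinCut N lam S T) : S = ∅ ∧ T = ∅ := by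
  simp only [← Finset.not_nonempty_iff_eq_empty, ← not_or]
  intro hne
  have hlt := hf.sum_max_sub_lt_of_isCut hsurp hmin.1 hne
  have hle := hmin.2 ∅ ∅ (isCut_empty_empty N)
  rw [cutCap_eq_sub_add, cutCap_eq_sub_add] at hle
  simp only [Finset.sum_empty] at hle
  linarith

end Flows

theorem empty_cut_unique_min_general (N : EqNet B C)
    {h : ℕ} (hpos : 0 < h)
    (BB : Fin h → Finset B) (r : Fin h → ℝ)
    (fstar : B → C → ℝ) (hbal : IsBalancedFlow N fstar)
    (hBcover : Finset.univ.biUnion BB = Finset.univ)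
    (hranti : StrictAnti r)
    (hsurp : ∀ i, ∀ b ∈ BB i, surplus N fstar b = r i)
    (lam : ℝ) (hlam : r ⟨0, hpos⟩ < lam) :
    IsMinCut N lam (∅ : Finset B) (∅ : Finset C) ∧
    (∀ S T, IsMinCut N lam S T → S = ∅ ∧ T = ∅) ∧
    kappa N lam = ∑ b, max 0 (N.e b - lam) := by
  have hflow : IsFlow N fstar := hbal.1.1
  have hsurp_lt : ∀ b, surplus N fstar b < lam := by
    intro b
    obtain ⟨i, -, hbi⟩ := Finset.mem_biUnion.1 (hBcover ▸ Finset.mem_univ b)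
    rw [hsurp i b hbi]
    exact (hranti.antitone (show (⟨0, hpos⟩ : Fin h) ≤ i from Nat.zero_le _)).trans_lt hlam
  have hmin := hflow.isMinCut_empty_empty fun b => (hsurp_lt b).le
  exact ⟨hmin, fun S T => hflow.eq_empty_of_isMinCut hsurp_lt,
    (kappa_eq_of_isMinCut hmin).trans (cutCap_empty_empty N lam)⟩

/-- For `λ > r_1`, `(∅, ∅)` is the unique minimum cut at `λ`; in
particular `κ(λ) = ∑_b max(0, e(b) − λ)` and everything lies on the sink side
of every minimum cut at `λ`. -/
theorem empty_cut_unique_min (N : EqNet B C)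
    {h : ℕ} (hpos : 0 < h)
    (BB : Fin h → Finset B) (CC : Fin h → Finset C) (r : Fin h → ℝ)
    (fstar : B → C → ℝ) (hbal : IsBalancedFlow N fstar)
    (hBne : ∀ i, (BB i).Nonempty)
    (hBdisj : ∀ i j, i ≠ j → Disjoint (BB i) (BB j))
    (hBcover : Finset.univ.biUnion BB = Finset.univ)
    (hCdisj : ∀ i j, i ≠ j → Disjoint (CC i) (CC j))
    (hCcover : Finset.univ.biUnion CC = Finset.univ)
    (hranti : StrictAnti r)
    (hrlast : r ⟨h - 1, Nat.sub_lt hpos Nat.one_pos⟩ = 0)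
    (hsurp : ∀ i, ∀ b ∈ BB i, surplus N fstar b = r i)
    (hsat : ∀ i : Fin h, (i : ℕ) + 1 < h → ∀ c ∈ CC i, Saturated N fstar c)
    (hflow0 : ∀ i j : Fin h, j < i → ∀ b ∈ BB i, ∀ c ∈ CC j, fstar b c = 0)
    (hnoedge : ∀ i j : Fin h, i < j → ∀ b ∈ BB i, ∀ c ∈ CC j, ¬ N.E b c)
    (hrecv : ∀ i : Fin h, (i : ℕ) + 1 < h → ∀ c ∈ CC i, ∃ b ∈ BB i, 0 < fstar b c)
    (lam : ℝ) (hlam : r ⟨0, hpos⟩ < lam) :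
    IsMinCut N lam (∅ : Finset B) (∅ : Finset C) ∧
    (∀ S T, IsMinCut N lam S T → S = ∅ ∧ T = ∅) ∧
    kappa N lam = ∑ b, max 0 (N.e b - lam) :=
  empty_cut_unique_min_general N hpos BB r fstar hbal hBcover hranti hsurp lam hlam
end

section
/- For all λ, λ' with 0 < λ' ≤ λ, the minimum cuts of minimum sink side are nested: if (S,T) is the minimum cut of minimum sink side at λ and (S',T') is the minimum cut of minimum sink side at λ', then S ⊆ S' and T ⊆ T' (the source side only grows as the parameter decreases). -/
open scoped Classical

variable {B C : Type} [Fintype B] [Fintype C] [Nonempty B] [Nonempty C]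

/-! Parametric min cuts are nested by uncrossing. Cut capacity is modular, so
`cap(S ∩ S') + cap(S ∪ S') = cap(S) + cap(S')` at every parameter. Going from `(S, T)` to
`(S ∩ S', T ∩ T')` moves the buyers of `S \ S'` to the sink side, whose source edges
`max 0 (e b - λ)` only get more expensive as `λ` decreases; so if `(S, T)` is minimum at `λ`,
the intersection is no cheaper at `λ' ≤ λ` either, and modularity makes `(S ∪ S', T ∪ T')`
a minimum cut at `λ'`. The minimum-sink-side cut at `λ'` then contains it. -/

theorem IsCut.inter {N : EqNet B C} {S S' : Finset B} {T T' : Finset C} (h : IsCut N S T)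
    (h' : IsCut N S' T') : IsCut N (S ∩ S') (T ∩ T') :=
  fun b hb c hbc => Finset.mem_inter.2
    ⟨h b (Finset.mem_inter.1 hb).1 c hbc, h' b (Finset.mem_inter.1 hb).2 c hbc⟩

theorem IsCut.union_s10 {N : EqNet B C} {S S' : Finset B} {T T' : Finset C} (h : IsCut N S T)
    (h' : IsCut N S' T') : IsCut N (S ∪ S') (T ∪ T') := by
  intro b hb c hbc
  rcases Finset.mem_union.1 hb with hb | hb
  · exact Finset.mem_union_left _ (h b hb c hbc)
  · exact Finset.mem_union_right _ (h' b hb c hbc)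

theorem cutCap_inter_add_cutCap_union (N : EqNet B C) (l : ℝ) (S S' : Finset B)
    (T T' : Finset C) :
    cutCap N l (S ∩ S') (T ∩ T') + cutCap N l (S ∪ S') (T ∪ T') =
      cutCap N l S T + cutCap N l S' T' := by
  unfold cutCap
  rw [Finset.compl_inter, Finset.compl_union]
  have hB := Finset.sum_union_inter (s₁ := Sᶜ) (s₂ := S'ᶜ) (f := fun b => max 0 (N.e b - l))
  have hC := Finset.sum_union_inter (s₁ := T) (s₂ := T') (f := N.p)
  linarith

theorem cutCap_sub_cutCap_of_subset (N : EqNet B C) (l : ℝ) {S₀ S : Finset B}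
    {T₀ T : Finset C} (hS : S₀ ⊆ S) (hT : T₀ ⊆ T) :
    cutCap N l S₀ T₀ - cutCap N l S T =
      ∑ b ∈ S \ S₀, max 0 (N.e b - l) - ∑ c ∈ T \ T₀, N.p c := by
  unfold cutCap
  have hB := Finset.sum_sdiff (f := fun b => max 0 (N.e b - l)) (Finset.compl_subset_compl.2 hS)
  have hC := Finset.sum_sdiff (f := N.p) hT
  rw [compl_sdiff_compl] at hB
  linarith

theorem cutCap_sub_cutCap_antitone (N : EqNet B C) {S₀ S : Finset B} {T₀ T : Finset C}
    (hS : S₀ ⊆ S) (hT : T₀ ⊆ T) :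
    Antitone fun l => cutCap N l S₀ T₀ - cutCap N l S T := by
  intro l' l hl
  simp only [cutCap_sub_cutCap_of_subset N _ hS hT]
  gcongr

theorem IsMinCut.union_of_le {N : EqNet B C} {lam lam' : ℝ} {S S' : Finset B}
    {T T' : Finset C} (hle : lam' ≤ lam) (h : IsMinCut N lam S T)
    (h' : IsMinCut N lam' S' T') : IsMinCut N lam' (S ∪ S') (T ∪ T') := by
  have hinter_lam : cutCap N lam S T ≤ cutCap N lam (S ∩ S') (T ∩ T') :=
    h.2 _ _ (h.1.inter h'.1)
  have hinter_lam' : cutCap N lam' S T ≤ cutCap N lam' (S ∩ S') (T ∩ T') := by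
    have := cutCap_sub_cutCap_antitone N (Finset.inter_subset_left (s₁ := S) (s₂ := S'))
      (Finset.inter_subset_left (s₁ := T) (s₂ := T')) hle
    simp only at this
    linarith
  have hunion : cutCap N lam' (S ∪ S') (T ∪ T') ≤ cutCap N lam' S' T' := by
    linarith [cutCap_inter_add_cutCap_union N lam' S S' T T']
  exact ⟨h.1.union_s10 h'.1, fun S₀ T₀ h₀ => hunion.trans (h'.2 S₀ T₀ h₀)⟩

theorem min_sink_cuts_nested_general (N : EqNet B C)
    (lam lam' : ℝ) (hle : lam' ≤ lam)
    (S : Finset B) (T : Finset C) (hST : HasMinSink N lam S T)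
    (S' : Finset B) (T' : Finset C) (hST' : HasMinSink N lam' S' T') :
    S ⊆ S' ∧ T ⊆ T' := by
  obtain ⟨hS, hT⟩ := hST'.2 _ _ (hST.1.union_of_le hle hST'.1)
  exact ⟨Finset.union_subset_left hS, Finset.union_subset_left hT⟩

/-- The minimum cuts of minimum sink side are nested: the source side
only grows as the parameter decreases. -/
theorem min_sink_cuts_nested (N : EqNet B C)
    {h : ℕ} (hpos : 0 < h)
    (BB : Fin h → Finset B) (CC : Fin h → Finset C) (r : Fin h → ℝ)
    (fstar : B → C → ℝ) (hbal : IsBalancedFlow N fstar)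
    (hBne : ∀ i, (BB i).Nonempty)
    (hBdisj : ∀ i j, i ≠ j → Disjoint (BB i) (BB j))
    (hBcover : Finset.univ.biUnion BB = Finset.univ)
    (hCdisj : ∀ i j, i ≠ j → Disjoint (CC i) (CC j))
    (hCcover : Finset.univ.biUnion CC = Finset.univ)
    (hranti : StrictAnti r)
    (hrlast : r ⟨h - 1, Nat.sub_lt hpos Nat.one_pos⟩ = 0)
    (hsurp : ∀ i, ∀ b ∈ BB i, surplus N fstar b = r i)
    (hsat : ∀ i : Fin h, (i : ℕ) + 1 < h → ∀ c ∈ CC i, Saturated N fstar c)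
    (hflow0 : ∀ i j : Fin h, j < i → ∀ b ∈ BB i, ∀ c ∈ CC j, fstar b c = 0)
    (hnoedge : ∀ i j : Fin h, i < j → ∀ b ∈ BB i, ∀ c ∈ CC j, ¬ N.E b c)
    (hrecv : ∀ i : Fin h, (i : ℕ) + 1 < h → ∀ c ∈ CC i, ∃ b ∈ BB i, 0 < fstar b c)
    (lam lam' : ℝ) (h0 : 0 < lam') (hle : lam' ≤ lam)
    (S : Finset B) (T : Finset C) (hST : HasMinSink N lam S T)
    (S' : Finset B) (T' : Finset C) (hST' : HasMinSink N lam' S' T') :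
    S ⊆ S' ∧ T ⊆ T' :=
  min_sink_cuts_nested_general N lam lam' hle S T hST S' T' hST'
end

section
/- (Correctness of step 4 of the algorithm) Let f* be a balanced flow of the equality network N and let r* = r_{f*} be its surplus vector. Define a flow of the network N' to be a function f : B × C → ℝ with f(b,c) ≥ 0 for all (b,c), f(b,c) = 0 whenever (b,c) ∉ E, ∑_{c∈C} f(b,c) ≤ e(b) − r*(b) for every b ∈ B, and ∑_{b∈B} f(b,c) ≤ p(c) for every c ∈ C. Then: (1) the maximum value of a flow of N' equals ∑_{b∈B} (e(b) − r*(b)); (2) every maximum flow of N' saturates every reduced source capacity, i.e., ∑_{c∈C} f(b,c) = e(b) − r*(b) for every b ∈ B; and (3) every maximum flow of N' is a balanced flow of N. -/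
/-!
The balanced flow `f*` is itself a flow of `N'` meeting every reduced capacity `e(b) − r*(b)`
with equality, so the maximum value of `N'` is `∑ b, (e(b) − r*(b))`. Since these capacities
bound the row sums of any flow of `N'`, a maximum flow of `N'` must meet each of them with
equality; its surplus vector is therefore exactly `r* ≥ 0`. Hence it is a flow of `N` with the
value of `f*` and the surplus norm of `f*`, i.e. a balanced flow of `N`.
-/

open scoped Classical

variable {B C : Type} [Fintype B] [Fintype C] [Nonempty B] [Nonempty C]

/-- A flow of the network `N'`, in which the capacity of the source edge of buyer
`b` is reduced to `e(b) − r*(b)`. -/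
def IsFlowN' (N : EqNet B C) (rstar : B → ℝ) (f : B → C → ℝ) : Prop :=
  (∀ b c, 0 ≤ f b c) ∧ (∀ b c, ¬ N.E b c → f b c = 0) ∧
  (∀ b, ∑ c, f b c ≤ N.e b - rstar b) ∧ (∀ c, ∑ b, f b c ≤ N.p c)

section

variable {N : EqNet B C} {f g : B → C → ℝ} {r : B → ℝ}

theorem surplus_nonneg_of_isFlow (hf : IsFlow N f) (b : B) : 0 ≤ surplus N f b :=
  sub_nonneg.mpr (hf.2.2.1 b)

theorem surplus_eq_of_sum_eq (h : ∀ b, ∑ c, f b c = N.e b - r b) : surplus N f = r := by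
  funext b
  rw [surplus, h b, sub_sub_cancel]

theorem flowValue_eq_sum_sub_surplus (N : EqNet B C) (f : B → C → ℝ) :
    flowValue f = ∑ b, (N.e b - surplus N f b) := by
  simp only [flowValue, surplus, sub_sub_cancel]

theorem isFlowN'_surplus_self (hf : IsFlow N f) : IsFlowN' N (surplus N f) f :=
  ⟨hf.1, hf.2.1, fun b => by rw [surplus, sub_sub_cancel], hf.2.2.2⟩

theorem IsFlowN'.isFlow (hf : IsFlowN' N r f) (hr : ∀ b, 0 ≤ r b) : IsFlow N f :=
  ⟨hf.1, hf.2.1, fun b => (hf.2.2.1 b).trans (sub_le_self _ (hr b)), hf.2.2.2⟩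

theorem IsFlowN'.flowValue_le (hf : IsFlowN' N r f) : flowValue f ≤ ∑ b, (N.e b - r b) :=
  Finset.sum_le_sum fun b _ => hf.2.2.1 b

theorem IsFlowN'.sum_eq_of_flowValue_eq (hf : IsFlowN' N r f)
    (hval : flowValue f = ∑ b, (N.e b - r b)) (b : B) : ∑ c, f b c = N.e b - r b := by
  have hslack : ∑ b, ((N.e b - r b) - ∑ c, f b c) = 0 := by
    rw [Finset.sum_sub_distrib, ← flowValue, hval, sub_self]
  have := (Finset.sum_eq_zero_iff_of_nonneg fun b _ => sub_nonneg.mpr (hf.2.2.1 b)).mp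
    hslack b (Finset.mem_univ b)
  linarith

theorem IsMaxFlow.of_flowValue_eq (hf : IsMaxFlow N f) (hg : IsFlow N g)
    (hval : flowValue g = flowValue f) : IsMaxFlow N g :=
  ⟨hg, fun h hh => hval ▸ hf.2 h hh⟩

theorem IsBalancedFlow.of_surplus_eq (hf : IsBalancedFlow N f) (hg : IsMaxFlow N g)
    (hsurplus : surplus N g = surplus N f) : IsBalancedFlow N g :=
  ⟨hg, fun h hh => hsurplus ▸ hf.2 h hh⟩

end

/-- (1) the maximum value of a flow of `N'` is `∑_b (e(b) − r*(b))`;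
(2) every maximum flow of `N'` saturates every reduced source capacity;
(3) every maximum flow of `N'` is a balanced flow of `N`. -/
theorem max_flow_of_reduced_network_is_balanced (N : EqNet B C)
    (fstar : B → C → ℝ) (hbal : IsBalancedFlow N fstar) :
    ((∃ f, IsFlowN' N (surplus N fstar) f ∧
        flowValue f = ∑ b, (N.e b - surplus N fstar b)) ∧
      (∀ f, IsFlowN' N (surplus N fstar) f →
        flowValue f ≤ ∑ b, (N.e b - surplus N fstar b))) ∧
    (∀ f, IsFlowN' N (surplus N fstar) f →
      (∀ g, IsFlowN' N (surplus N fstar) g → flowValue g ≤ flowValue f) →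
      (∀ b, ∑ c, f b c = N.e b - surplus N fstar b) ∧ IsBalancedFlow N f) := by
  have hstar := isFlowN'_surplus_self hbal.1.1
  have hval := flowValue_eq_sum_sub_surplus N fstar
  refine ⟨⟨⟨fstar, hstar, hval⟩, fun f hf => hf.flowValue_le⟩, fun f hf hfmax => ?_⟩
  have hfval : flowValue f = ∑ b, (N.e b - surplus N fstar b) :=
    le_antisymm hf.flowValue_le (hval ▸ hfmax fstar hstar)
  have hsat := hf.sum_eq_of_flowValue_eq hfval
  have hflow := hf.isFlow (surplus_nonneg_of_isFlow hbal.1.1)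
  have hmax := hbal.1.of_flowValue_eq hflow (hfval.trans hval.symm)
  exact ⟨hsat, hbal.of_surplus_eq hmax (surplus_eq_of_sum_eq hsat)⟩
end
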